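/- arXiv:2206.01027 — 3 statements merged into one kernel-verified Lean document; each statement's English description precedes it below -/
import Mathlib

section
/- For any multisegment α, n_{α~} ≥ L_α and n_α ≥ L_{α~}: the number of segments of the Zelevinsky involution of α is at least the maximal length of a segment of α, and the number of segments of α is at least the maximal length of a segment of α~. -/
/-- A finite multiset of integer pairs `(b, e)` is a multisegment if each pair
satisfies `b ≤ e`; the pair `(b, e)` encodes the segment `{b, b+1, …, e}`. -/
def IsMultisegment (α : Multiset (ℤ × ℤ)) : Prop := ∀ p ∈ α, p.1 ≤ p.2

/-- The length `e - b + 1` of the segment `(b, e)`. -/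
def segLen (p : ℤ × ℤ) : ℕ := (p.2 - p.1 + 1).toNat

/-- `L_α`: the maximal length of a segment of `α`. -/
def maxLen (α : Multiset (ℤ × ℤ)) : ℕ := (α.map segLen).sup

/-- The union of the segments `p` and `q` is a segment strictly containing both. -/
def Linked (p q : ℤ × ℤ) : Prop :=
  q.1 ≤ p.2 + 1 ∧ p.1 ≤ q.2 + 1 ∧
    (min p.1 q.1, max p.2 q.2) ≠ p ∧ (min p.1 q.1, max p.2 q.2) ≠ q

/-- The intersection of two segments, as a multiset (empty if the segments are disjoint). -/
def interMS (p q : ℤ × ℤ) : Multiset (ℤ × ℤ) :=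
  if max p.1 q.1 ≤ min p.2 q.2 then {(max p.1 q.1, min p.2 q.2)} else 0

/-- An elementary operation replaces two segments whose union is a segment strictly
containing both by their union and (if nonempty) their intersection. -/
def ElemStep (α β : Multiset (ℤ × ℤ)) : Prop :=
  ∃ p q rest, α = p ::ₘ q ::ₘ rest ∧ Linked p q ∧
    β = (min p.1 q.1, max p.2 q.2) ::ₘ (interMS p q + rest)

/-- The partial order on multisegments: `α ≤ β` iff `β` is obtained from `α` by
a finite (possibly empty) sequence of elementary operations. -/
def msLE (α β : Multiset (ℤ × ℤ)) : Prop := Relation.ReflTransGen ElemStep α β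

/-- Mœglin–Waldspurger: the chain `Δ_e, Δ_{e-1}, …, Δ_m` starting from `Δ`,
where at each step we pass to a segment of `α` with end value one less, preceding
the current segment, and with maximal base value (fuel-driven recursion). -/
def mwChainAux : ℕ → Multiset (ℤ × ℤ) → ℤ × ℤ → List (ℤ × ℤ)
  | 0, _, Δ => [Δ]
  | n + 1, α, Δ =>
    let s := ((α.filter (fun p => p.2 = Δ.2 - 1 ∧ p.1 < Δ.1)).map Prod.fst).toFinset
    if h : s.Nonempty then Δ :: mwChainAux n α (s.max' h, Δ.2 - 1) else [Δ]

/-- The Mœglin–Waldspurger chain `Δ_e, Δ_{e-1}, …, Δ_m` of `α`: here `e` is the largest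
end value of a segment of `α` and `Δ_e` has maximal base value among segments with
end value `e`. -/
def mwChain (α : Multiset (ℤ × ℤ)) : List (ℤ × ℤ) :=
  let ends := (α.map Prod.snd).toFinset
  if h : ends.Nonempty then
    let e := ends.max' h
    let bases := ((α.filter (fun p => p.2 = e)).map Prod.fst).toFinset
    if hb : bases.Nonempty then mwChainAux α.card α (bases.max' hb, e) else []
  else []

/-- `M(α) = [m, e]`. -/
def mwSegment (α : Multiset (ℤ × ℤ)) : ℤ × ℤ :=
  (((mwChain α).getLastD (0, 0)).2, ((mwChain α).headD (0, 0)).2)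

/-- Delete the end value from a segment, discarding the segment if it becomes empty. -/
def mwShrink (p : ℤ × ℤ) : Multiset (ℤ × ℤ) :=
  if p.1 ≤ p.2 - 1 then {(p.1, p.2 - 1)} else 0

/-- `α ∖ M(α)`: delete the integer `i` from the segment `Δ_i` for each `m ≤ i ≤ e`. -/
def mwResidual (α : Multiset (ℤ × ℤ)) : Multiset (ℤ × ℤ) :=
  (α - ↑(mwChain α)) + (↑(mwChain α) : Multiset (ℤ × ℤ)).bind mwShrink

/-- The total number of integers occurring in the segments of `α` (with multiplicity). -/
def msSize (α : Multiset (ℤ × ℤ)) : ℕ := (α.map segLen).sum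

def tildeAux : ℕ → Multiset (ℤ × ℤ) → Multiset (ℤ × ℤ)
  | 0, _ => 0
  | n + 1, α => if α = 0 then 0 else mwSegment α ::ₘ tildeAux n (mwResidual α)

/-- The Zelevinsky involution `α ↦ α~`, computed by the Mœglin–Waldspurger algorithm:
`∅~ = ∅` and `α~ = {M(α)} ⊎ (α ∖ M(α))~`. -/
def tilde (α : Multiset (ℤ × ℤ)) : Multiset (ℤ × ℤ) := tildeAux (msSize α) α

/-- The simple multisegment `{[b, e], [b+1, e+1], …, [b+n-1, e+n-1]}`. -/
def simpleMS (b e : ℤ) (n : ℕ) : Multiset (ℤ × ℤ) :=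
  (Multiset.range n).map fun k => (b + (k : ℤ), e + (k : ℤ))

/-- A multisegment is simple if it has the form `{[b,e], [b+1,e+1], …, [b+n-1, e+n-1]}`
with `b ≤ e` and `n ≥ 1`. -/
def IsSimple (α : Multiset (ℤ × ℤ)) : Prop :=
  ∃ (b e : ℤ) (n : ℕ), b ≤ e ∧ 1 ≤ n ∧ α = simpleMS b e n

/-- The union `⋃_{Δ ∈ α} Δ` of the segments of `α`, as a set of integers. -/
def unionSet (α : Multiset (ℤ × ℤ)) : Set ℤ := {x | ∃ p ∈ α, p.1 ≤ x ∧ x ≤ p.2}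

/-- `c_α`: the minimal number of segments whose union is `⋃_{Δ ∈ α} Δ`. -/
noncomputable def cNum (α : Multiset (ℤ × ℤ)) : ℕ :=
  sInf {n | ∃ β : Multiset (ℤ × ℤ), IsMultisegment β ∧ β.card = n ∧ unionSet β = unionSet α}

/-!
One step of the Mœglin–Waldspurger algorithm picks a chain of `k ≥ 1` distinct segments of `α`
with consecutive end values, adds `M(α)` of length `k ≤ n_α` to `α~`, and removes the end point of
each chain segment. So `α ∖ M(α)` has at most `n_α` segments, its maximal length is at least
`L_α - 1`, and its total size is that of `α` minus `k`; the latter is what makes the fuel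
`msSize α` of `tilde` sufficient. Both inequalities then follow by induction on the steps.
-/

section Chain

variable (α : Multiset (ℤ × ℤ))

lemma mwChainAux_eq_cons (n : ℕ) (Δ : ℤ × ℤ) : ∃ l, mwChainAux n α Δ = Δ :: l := by
  cases n with
  | zero => exact ⟨[], rfl⟩
  | succ n =>
    rw [mwChainAux]
    split
    · exact ⟨_, rfl⟩
    · exact ⟨[], rfl⟩

lemma snd_le_of_mem_mwChainAux (n : ℕ) (Δ p : ℤ × ℤ) (hp : p ∈ mwChainAux n α Δ) :
    p.2 ≤ Δ.2 := by
  induction n generalizing Δ with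
  | zero => simp_all [mwChainAux]
  | succ n ih =>
    rw [mwChainAux] at hp
    split at hp
    · rcases List.mem_cons.1 hp with rfl | hp
      · exact le_rfl
      · have := ih _ hp
        dsimp only at this
        omega
    · simp_all

lemma mwChainAux_nodup (n : ℕ) (Δ : ℤ × ℤ) : (mwChainAux n α Δ).Nodup := by
  induction n generalizing Δ with
  | zero => simp [mwChainAux]
  | succ n ih =>
    rw [mwChainAux]
    split
    · refine List.nodup_cons.2 ⟨fun h => ?_, ih _⟩
      have := snd_le_of_mem_mwChainAux α n _ _ h
      dsimp only at this
      omega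
    · simp

lemma getLastD_mwChainAux_snd (n : ℕ) (Δ d : ℤ × ℤ) :
    ((mwChainAux n α Δ).getLastD d).2 = Δ.2 - (mwChainAux n α Δ).length + 1 := by
  induction n generalizing Δ d with
  | zero => simp [mwChainAux]
  | succ n ih =>
    rw [mwChainAux]
    split
    · rw [List.getLastD_cons, List.length_cons, ih]
      push_cast
      ring
    · simp

lemma coe_mwChainAux_le (n : ℕ) (Δ : ℤ × ℤ) (hΔ : Δ ∈ α) :
    (mwChainAux n α Δ : Multiset (ℤ × ℤ)) ≤ α := by
  rw [Multiset.le_iff_subset (Multiset.coe_nodup.2 (mwChainAux_nodup α n Δ))]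
  induction n generalizing Δ with
  | zero => simpa [mwChainAux] using hΔ
  | succ n ih =>
    rw [mwChainAux]
    split
    · rename_i hs
      have hnext := Finset.max'_mem _ hs
      simp only [Multiset.mem_toFinset, Multiset.mem_map, Multiset.mem_filter] at hnext
      obtain ⟨q, ⟨hq, hq2, -⟩, hq1⟩ := hnext
      rw [← hq1, ← hq2]
      exact Multiset.cons_subset.2 ⟨hΔ, ih q hq⟩
    · simpa using hΔ

lemma exists_mwChain_eq_mwChainAux (hα : α ≠ 0) :
    ∃ Δ ∈ α, mwChain α = mwChainAux (Multiset.card α) α Δ := by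
  obtain ⟨p, hp⟩ := Multiset.exists_mem_of_ne_zero hα
  have hends : (α.map Prod.snd).toFinset.Nonempty := ⟨p.2, by simpa using ⟨p.1, hp⟩⟩
  set e := (α.map Prod.snd).toFinset.max' hends
  obtain ⟨b₀, hb₀⟩ : ∃ b, (b, e) ∈ α := by simpa [e] using Finset.max'_mem _ hends
  have hbases : ((α.filter fun p => p.2 = e).map Prod.fst).toFinset.Nonempty :=
    ⟨b₀, by simpa using hb₀⟩
  refine ⟨(((α.filter fun p => p.2 = e).map Prod.fst).toFinset.max' hbases, e), ?_, ?_⟩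
  · simpa using Finset.max'_mem _ hbases
  · rw [mwChain, dif_pos hends, dif_pos hbases]

lemma coe_mwChain_le : (mwChain α : Multiset (ℤ × ℤ)) ≤ α := by
  rcases eq_or_ne α 0 with rfl | hα
  · simp [mwChain]
  · obtain ⟨Δ, hΔ, hc⟩ := exists_mwChain_eq_mwChainAux α hα
    rw [hc]
    exact coe_mwChainAux_le α _ Δ hΔ

lemma mwChain_ne_nil (hα : α ≠ 0) : mwChain α ≠ [] := by
  obtain ⟨Δ, -, hc⟩ := exists_mwChain_eq_mwChainAux α hα
  obtain ⟨l, hl⟩ := mwChainAux_eq_cons α (Multiset.card α) Δ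
  simp [hc, hl]

lemma segLen_mwSegment (hα : α ≠ 0) : segLen (mwSegment α) = (mwChain α).length := by
  obtain ⟨Δ, -, hc⟩ := exists_mwChain_eq_mwChainAux α hα
  obtain ⟨l, hl⟩ := mwChainAux_eq_cons α (Multiset.card α) Δ
  have hlast := getLastD_mwChainAux_snd α (Multiset.card α) Δ (0, 0)
  rw [hl] at hlast
  rw [mwSegment, segLen, hc, hl, hlast, List.headD_cons]
  dsimp only
  omega

end Chain

section Residual

lemma maxLen_le_iff (α : Multiset (ℤ × ℤ)) (k : ℕ) :
    maxLen α ≤ k ↔ ∀ p ∈ α, segLen p ≤ k := by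
  simp only [maxLen, Multiset.sup_le, Multiset.forall_mem_map_iff]

lemma maxLen_mono {α β : Multiset (ℤ × ℤ)} (h : α ⊆ β) : maxLen α ≤ maxLen β :=
  Multiset.sup_mono (Multiset.map_subset_map h)

lemma le_maxLen {α : Multiset (ℤ × ℤ)} {p : ℤ × ℤ} (hp : p ∈ α) : segLen p ≤ maxLen α :=
  Multiset.le_sup (Multiset.mem_map_of_mem _ hp)

lemma msSize_add (α β : Multiset (ℤ × ℤ)) : msSize (α + β) = msSize α + msSize β := by
  simp [msSize]

lemma segLen_le_maxLen_mwShrink_add_one (p : ℤ × ℤ) : segLen p ≤ maxLen (mwShrink p) + 1 := by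
  unfold mwShrink maxLen
  split_ifs <;> simp [segLen] <;> omega

lemma msSize_bind_mwShrink_add_card (s : Multiset (ℤ × ℤ)) (hs : IsMultisegment s) :
    msSize (s.bind mwShrink) + Multiset.card s = msSize s := by
  induction s using Multiset.induction_on with
  | empty => simp [msSize]
  | cons p s ih =>
    have hp : p.1 ≤ p.2 := hs p (Multiset.mem_cons_self p s)
    have hshrink : msSize (mwShrink p) + 1 = segLen p := by
      unfold mwShrink
      split_ifs <;> simp [msSize, segLen] <;> omega
    have hcons : msSize (p ::ₘ s) = segLen p + msSize s := by simp [msSize]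
    have := ih fun q hq => hs q (Multiset.mem_cons_of_mem hq)
    rw [Multiset.cons_bind, msSize_add, Multiset.card_cons, hcons]
    omega

lemma card_bind_mwShrink_le (s : Multiset (ℤ × ℤ)) :
    Multiset.card (s.bind mwShrink) ≤ Multiset.card s := by
  induction s using Multiset.induction_on with
  | empty => simp
  | cons p s ih =>
    have : Multiset.card (mwShrink p) ≤ 1 := by
      unfold mwShrink
      split_ifs <;> simp
    rw [Multiset.cons_bind, Multiset.card_add, Multiset.card_cons]
    omega

variable (α : Multiset (ℤ × ℤ))

lemma msSize_mwResidual_add_length (hα : IsMultisegment α) :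
    msSize (mwResidual α) + (mwChain α).length = msSize α := by
  have hchain : IsMultisegment (mwChain α) :=
    fun p hp => hα p (Multiset.mem_of_le (coe_mwChain_le α) hp)
  have := msSize_bind_mwShrink_add_card _ hchain
  rw [Multiset.coe_card] at this
  conv_rhs => rw [← tsub_add_cancel_of_le (coe_mwChain_le α)]
  rw [mwResidual, msSize_add, msSize_add]
  omega

lemma card_mwResidual_le : Multiset.card (mwResidual α) ≤ Multiset.card α := by
  have := card_bind_mwShrink_le (mwChain α)
  conv_rhs => rw [← tsub_add_cancel_of_le (coe_mwChain_le α)]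
  rw [mwResidual, Multiset.card_add, Multiset.card_add]
  omega

lemma isMultisegment_mwResidual (hα : IsMultisegment α) : IsMultisegment (mwResidual α) := by
  intro p hp
  rcases Multiset.mem_add.1 hp with hp | hp
  · exact hα p (Multiset.mem_of_le (Multiset.sub_le_self _ _) hp)
  · obtain ⟨q, -, hq⟩ := Multiset.mem_bind.1 hp
    unfold mwShrink at hq
    split_ifs at hq with h
    · rw [Multiset.mem_singleton.1 hq]
      exact h
    · simp at hq

lemma maxLen_le_maxLen_mwResidual_add_one : maxLen α ≤ maxLen (mwResidual α) + 1 := by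
  rw [maxLen_le_iff]
  intro p hp
  rw [← tsub_add_cancel_of_le (coe_mwChain_le α), Multiset.mem_add] at hp
  rcases hp with hp | hp
  · have : segLen p ≤ maxLen (mwResidual α) := le_maxLen (Multiset.mem_add.2 (Or.inl hp))
    omega
  · have hsub : maxLen (mwShrink p) ≤ maxLen (mwResidual α) := maxLen_mono fun q hq =>
      Multiset.mem_add.2 (Or.inr (Multiset.mem_bind.2 ⟨p, hp, hq⟩))
    have := segLen_le_maxLen_mwShrink_add_one p
    omega

end Residual

lemma maxLen_tildeAux_le_card (n : ℕ) (α : Multiset (ℤ × ℤ)) :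
    maxLen (tildeAux n α) ≤ Multiset.card α := by
  induction n generalizing α with
  | zero => simp [tildeAux, maxLen]
  | succ n ih =>
    rw [tildeAux]
    split_ifs with hα
    · simp [maxLen]
    have hM : segLen (mwSegment α) ≤ Multiset.card α := by
      rw [segLen_mwSegment α hα, ← Multiset.coe_card]
      exact Multiset.card_le_card (coe_mwChain_le α)
    have hres := (ih (mwResidual α)).trans (card_mwResidual_le α)
    simp only [maxLen_le_iff, Multiset.mem_cons, forall_eq_or_imp] at hres ⊢
    exact ⟨hM, hres⟩

lemma maxLen_le_card_tildeAux (n : ℕ) (α : Multiset (ℤ × ℤ)) (hα : IsMultisegment α)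
    (hsize : msSize α ≤ n) : maxLen α ≤ Multiset.card (tildeAux n α) := by
  induction n generalizing α with
  | zero =>
    rcases eq_or_ne α 0 with rfl | hne
    · simp [maxLen]
    have := msSize_mwResidual_add_length α hα
    have := List.length_pos_iff.2 (mwChain_ne_nil α hne)
    omega
  | succ n ih =>
    rw [tildeAux]
    split_ifs with hne
    · simp [hne, maxLen]
    have hstep := msSize_mwResidual_add_length α hα
    have hlen := List.length_pos_iff.2 (mwChain_ne_nil α hne)
    have hres := ih _ (isMultisegment_mwResidual α hα) (by omega)
    have := maxLen_le_maxLen_mwResidual_add_one α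
    rw [Multiset.card_cons]
    omega

/-- `n_{α~} ≥ L_α` and `n_α ≥ L_{α~}`. -/
theorem card_tilde_ge_maxLen (α : Multiset (ℤ × ℤ)) (hα : IsMultisegment α) :
    maxLen α ≤ Multiset.card (tilde α) ∧ maxLen (tilde α) ≤ Multiset.card α :=
  ⟨maxLen_le_card_tildeAux _ α hα le_rfl, maxLen_tildeAux_le_card _ α⟩
end

section
/- If α = {[b,e], [b+1,e+1], …, [b+n−1,e+n−1]} is a simple multisegment, then its Zelevinsky involution is α~ = {[e−k, e+n−k−1] : 0 ≤ k ≤ e−b}; in particular α~ is again a simple multisegment. -/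
/-!
For `α = {[b+k, e+k] : k < n}` the segment `[b+k, e+k]` is preceded by `[b+k-1, e+k-1]`
and nothing precedes `[b, e]`, so the Mœglin–Waldspurger chain runs through all of `α` and
`M(α) = [e, e+n-1]`. Removing the end of every segment leaves the simple multisegment with
`e` replaced by `e - 1` (or `∅` when `b = e`), so induction on `e - b` gives
`α~ = {[b+i, b+n-1+i] : 0 ≤ i ≤ e - b}`.
-/

namespace Multiset

theorem map_range_reflect {β : Type*} (f : ℕ → β) (n : ℕ) :
    (range n).map (fun k => f (n - 1 - k)) = (range n).map f := by
  have h : (List.range n).reverse = (List.range n).map (n - 1 - ·) := by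
    simpa [List.range_eq_range'] using List.reverse_range' (s := 0) (n := n)
  calc (range n).map (fun k => f (n - 1 - k)) = ((range n).map (n - 1 - ·)).map f :=
        (map_map _ _ _).symm
    _ = (range n).map f := by rw [← coe_range, map_coe, ← h, coe_reverse]

/-- The coercion `Multiset ℕ → Multiset ℤ` in `simpleMS` is the monad lift. -/
theorem natCast_range (n : ℕ) :
    ((range n : Multiset ℕ) : Multiset ℤ) = (range n).map Nat.cast := by
  simp only [bind_pure_comp, fmap_def]

end Multiset

section SimpleMS

variable (b e : ℤ) (n : ℕ)

theorem simpleMS_eq_map_range :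
    simpleMS b e n = (Multiset.range n).map fun k : ℕ => (b + k, e + k) := by
  rw [simpleMS, Multiset.natCast_range, Multiset.map_map]
  rfl

variable {b e n} in
theorem mem_simpleMS {p : ℤ × ℤ} : p ∈ simpleMS b e n ↔ ∃ k < n, (b + k, e + k) = p := by
  simp [simpleMS_eq_map_range]

theorem card_simpleMS : Multiset.card (simpleMS b e n) = n := by
  simp [simpleMS_eq_map_range]

theorem simpleMS_succ : simpleMS b e (n + 1) = (b + n, e + n) ::ₘ simpleMS b e n := by
  simp [simpleMS_eq_map_range, Multiset.range_succ]

theorem simpleMS_succ_eq_map_range_sub :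
    simpleMS b e (n + 1) = (Multiset.range (n + 1)).map fun k : ℕ => (b + n - k, e + n - k) := by
  rw [simpleMS_eq_map_range, ← Multiset.map_range_reflect]
  refine Multiset.map_congr rfl fun k hk => ?_
  have hk : k ≤ n := Nat.lt_succ_iff.mp (Multiset.mem_range.mp hk)
  simp only [Nat.add_sub_cancel, Nat.cast_sub hk]
  ring_nf

theorem msSize_simpleMS : msSize (simpleMS b e n) = n * (e - b + 1).toNat := by
  simp [msSize, simpleMS_eq_map_range, Function.comp_def, segLen]

end SimpleMS

section MoeglinWaldspurger

variable {α : Multiset (ℤ × ℤ)}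

theorem mwChainAux_succ_eq_singleton {c i : ℤ} (f : ℕ)
    (h : ∀ p ∈ α, p.2 = i → c ≤ p.1) :
    mwChainAux (f + 1) α (c, i + 1) = [(c, i + 1)] := by
  rw [mwChainAux, dif_neg]
  rintro ⟨x, hx⟩
  simp only [Multiset.mem_toFinset, Multiset.mem_map, Multiset.mem_filter,
    add_sub_cancel_right] at hx
  obtain ⟨p, ⟨hp, hend, hbase⟩, -⟩ := hx
  exact (h p hp hend).not_gt hbase

theorem mwChainAux_succ_eq_cons {c i x : ℤ} (f : ℕ) (hx : (x, i) ∈ α) (hxc : x < c)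
    (hmax : ∀ p ∈ α, p.2 = i → p.1 < c → p.1 ≤ x) :
    mwChainAux (f + 1) α (c, i + 1) = (c, i + 1) :: mwChainAux f α (x, i) := by
  have hmem : x ∈ ((α.filter fun p => p.2 = i ∧ p.1 < c).map Prod.fst).toFinset := by
    simp only [Multiset.mem_toFinset, Multiset.mem_map, Multiset.mem_filter]
    exact ⟨(x, i), ⟨hx, rfl, hxc⟩, rfl⟩
  simp only [mwChainAux, add_sub_cancel_right]
  rw [dif_pos ⟨x, hmem⟩, (Finset.max'_eq_iff _ _ x).mpr ⟨hmem, ?_⟩]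
  simp only [Multiset.mem_toFinset, Multiset.mem_map, Multiset.mem_filter]
  rintro _ ⟨p, ⟨hp, hend, hbase⟩, rfl⟩
  exact hmax p hp hend hbase

theorem mwChain_eq_mwChainAux {x e : ℤ} (hx : (x, e) ∈ α) (hend : ∀ p ∈ α, p.2 ≤ e)
    (hbase : ∀ p ∈ α, p.2 = e → p.1 ≤ x) :
    mwChain α = mwChainAux (Multiset.card α) α (x, e) := by
  have he : e ∈ (α.map Prod.snd).toFinset :=
    Multiset.mem_toFinset.mpr (Multiset.mem_map_of_mem _ hx)
  have hx' : x ∈ ((α.filter fun p => p.2 = e).map Prod.fst).toFinset := by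
    simp only [Multiset.mem_toFinset, Multiset.mem_map, Multiset.mem_filter]
    exact ⟨(x, e), ⟨hx, rfl⟩, rfl⟩
  have hmax_e : (α.map Prod.snd).toFinset.max' ⟨e, he⟩ = e := by
    refine (Finset.max'_eq_iff _ _ e).mpr ⟨he, ?_⟩
    simp only [Multiset.mem_toFinset, Multiset.mem_map]
    rintro _ ⟨p, hp, rfl⟩
    exact hend p hp
  simp only [mwChain]
  rw [dif_pos ⟨e, he⟩]
  simp only [hmax_e]
  rw [dif_pos ⟨x, hx'⟩, (Finset.max'_eq_iff _ _ x).mpr ⟨hx', ?_⟩]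
  simp only [Multiset.mem_toFinset, Multiset.mem_map, Multiset.mem_filter]
  rintro _ ⟨p, ⟨hp, hpe⟩, rfl⟩
  exact hbase p hp hpe

theorem tildeAux_zero_right (f : ℕ) : tildeAux f 0 = 0 := by
  cases f <;> simp [tildeAux]

end MoeglinWaldspurger

section MoeglinWaldspurgerSimple

variable (b e : ℤ)

theorem mwChainAux_simpleMS (n : ℕ) : ∀ j fuel : ℕ, j < n → j ≤ fuel →
    mwChainAux fuel (simpleMS b e n) (b + j, e + j) =
      ((List.range (j + 1)).map fun i : ℕ => (b + i, e + i)).reverse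
  | 0, 0, _, _ => by simp [mwChainAux]
  | 0, f + 1, _, _ => by
    have h := mwChainAux_succ_eq_singleton (α := simpleMS b e n) (c := b) (i := e - 1) f
      (by
        rintro _ hp hend
        obtain ⟨k, -, rfl⟩ := mem_simpleMS.mp hp
        simp only at hend ⊢
        omega)
    simpa using h
  | j + 1, f + 1, hj, hf => by
    have h := mwChainAux_succ_eq_cons (α := simpleMS b e n) (c := b + j + 1) (i := e + j)
      (x := b + j) f (mem_simpleMS.mpr ⟨j, by omega, rfl⟩) (by omega)
      (by rintro _ hp hend hbase; obtain ⟨k, -, rfl⟩ := mem_simpleMS.mp hp; omega)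
    push_cast
    rw [← add_assoc, ← add_assoc, h, mwChainAux_simpleMS n j f (by omega) (by omega),
      List.range_succ (n := j + 1)]
    simp [add_assoc]

theorem mwChain_simpleMS (m : ℕ) :
    mwChain (simpleMS b e (m + 1)) =
      ((List.range (m + 1)).map fun i : ℕ => (b + i, e + i)).reverse := by
  rw [mwChain_eq_mwChainAux (x := b + m) (e := e + m) (mem_simpleMS.mpr ⟨m, by omega, rfl⟩),
    card_simpleMS, mwChainAux_simpleMS b e (m + 1) m (m + 1) (by omega) (by omega)]
  · rintro _ hp; obtain ⟨k, hk, rfl⟩ := mem_simpleMS.mp hp; simp only; omega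
  · rintro _ hp hend; obtain ⟨k, -, rfl⟩ := mem_simpleMS.mp hp; simp only at hend ⊢; omega

theorem coe_mwChain_simpleMS (m : ℕ) :
    (mwChain (simpleMS b e (m + 1)) : Multiset (ℤ × ℤ)) = simpleMS b e (m + 1) := by
  rw [mwChain_simpleMS, Multiset.coe_reverse, ← Multiset.map_coe, Multiset.coe_range,
    simpleMS_eq_map_range]

theorem mwSegment_simpleMS (m : ℕ) : mwSegment (simpleMS b e (m + 1)) = (e, e + m) := by
  simp [mwSegment, mwChain_simpleMS, List.getLastD_eq_getLast?, List.headD_eq_head?_getD,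
    List.head?_range, List.getLast?_range]

end MoeglinWaldspurgerSimple

theorem mwResidual_simpleMS_of_lt {b e : ℤ} (h : b < e) (m : ℕ) :
    mwResidual (simpleMS b e (m + 1)) = simpleMS b (e - 1) (m + 1) := by
  rw [mwResidual, coe_mwChain_simpleMS, tsub_self, zero_add, simpleMS_eq_map_range,
    simpleMS_eq_map_range, Multiset.bind_map]
  rw [Multiset.bind_congr fun k _ => ?_, Multiset.bind_singleton]
  rw [mwShrink, if_pos (by simp only; omega), sub_add_eq_add_sub]

theorem mwResidual_simpleMS_self (b : ℤ) (m : ℕ) :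
    mwResidual (simpleMS b b (m + 1)) = 0 := by
  rw [mwResidual, coe_mwChain_simpleMS, tsub_self, zero_add, Multiset.bind_congr
    fun p hp => ?_, Multiset.bind_zero]
  obtain ⟨k, -, rfl⟩ := mem_simpleMS.mp hp
  rw [mwShrink, if_neg (by simp only; omega)]

theorem tildeAux_simpleMS (b : ℤ) (m : ℕ) : ∀ d fuel : ℕ, d < fuel →
    tildeAux fuel (simpleMS b (b + d) (m + 1)) = simpleMS b (b + m) (d + 1)
  | 0, f + 1, _ => by
    rw [tildeAux, if_neg (by simp [simpleMS_eq_map_range]), Nat.cast_zero, add_zero,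
      mwSegment_simpleMS, mwResidual_simpleMS_self, tildeAux_zero_right, simpleMS_succ]
    simp [simpleMS_eq_map_range]
  | d + 1, f + 1, hd => by
    rw [tildeAux, if_neg (by simp [simpleMS_eq_map_range]), mwSegment_simpleMS,
      mwResidual_simpleMS_of_lt (by omega), show b + ((d + 1 : ℕ) : ℤ) - 1 = b + d by omega,
      tildeAux_simpleMS b m d f (by omega), simpleMS_succ b (b + m) (d + 1)]
    push_cast
    ring_nf

theorem tilde_simpleMS_eq_simpleMS (b : ℤ) (d m : ℕ) :
    tilde (simpleMS b (b + d) (m + 1)) = simpleMS b (b + m) (d + 1) := by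
  refine tildeAux_simpleMS b m d _ ?_
  rw [msSize_simpleMS, show (b + d - b + 1).toNat = d + 1 by omega]
  nlinarith

/-- The Zelevinsky involution of the simple multisegment
`{[b,e], [b+1,e+1], …, [b+n-1,e+n-1]}` is `{[e-k, e+n-k-1] : 0 ≤ k ≤ e-b}`;
in particular it is again simple. -/
theorem tilde_simpleMS (b e : ℤ) (n : ℕ) (hbe : b ≤ e) (hn : 1 ≤ n) :
    tilde (simpleMS b e n) =
      (Multiset.range (e - b + 1).toNat).map
        (fun k => (e - (k : ℤ), e + (n : ℤ) - (k : ℤ) - 1)) ∧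
    IsSimple (tilde (simpleMS b e n)) := by
  obtain ⟨d, rfl⟩ : ∃ d : ℕ, e = b + d := ⟨(e - b).toNat, by omega⟩
  obtain ⟨m, rfl⟩ : ∃ m : ℕ, n = m + 1 := ⟨n - 1, by omega⟩
  rw [tilde_simpleMS_eq_simpleMS]
  refine ⟨?_, b, b + m, d + 1, by omega, by omega, rfl⟩
  rw [simpleMS_succ_eq_map_range_sub, Multiset.natCast_range, Multiset.map_map,
    show (b + d - b + 1).toNat = d + 1 by omega]
  refine Multiset.map_congr rfl fun k _ => ?_
  simp only [Function.comp_apply]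
  push_cast
  ring_nf
end

section
/- Let E_0, E_1, …, E_k be finite-dimensional complex vector spaces and let V be the set of tuples x = (x_1, …, x_k) with x_i a linear map E_i → E_{i−1}. Let H = GL(E_0) × GL(E_1) × ⋯ × GL(E_k) act on V by (h_0, …, h_k) · (x_1, …, x_k) = (h_0 x_1 h_1^{−1}, …, h_{k−1} x_k h_k^{−1}). For 0 ≤ j < i ≤ k, set x_{ij} := x_{j+1} ∘ x_{j+2} ∘ ⋯ ∘ x_i : E_i → E_j. Then two tuples x, y ∈ V lie in the same H-orbit if and only if rank(x_{ij}) = rank(y_{ij}) for all 0 ≤ j < i ≤ k. -/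
/-!
By rank–nullity the rank data of `x` are the dimensions of the kernels `chainKer x m d ⊆ E m` of
its `d`-step composites, and it is these dimensions that determine the orbit. Induct on `k`. Once
`x` and `y` are matched on `E 0, …, E n`, it remains to find an automorphism `A` of the chain `y`
and `b ∈ GL(E (n+1))` with `A n ∘ f = y n ∘ b`, where `f` is the transported `x n`. The kernel
dimensions say that `range f` and `range (y n)` meet each member of the flag `chainKer y n •` in
equal dimensions; splitting the flag along complements of the two ranges adapted to it (a
complement `C` of `R` is adapted to `F` if `F d = R ⊓ F d ⊔ C ⊓ F d` for all `d`) yields a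
flag-preserving automorphism `a` of `E n` carrying one range onto the other. Such an `a` extends
down the chain: it induces an automorphism of `range (y (n-1))`, which is glued with the identity
on a complement adapted to the next flag. Finally, two maps with the same range differ by an
automorphism of the source.
-/

/-- The composite `x_{(j+d) j} := x_{j+1} ∘ ⋯ ∘ x_{j+d} : E (j+d) →ₗ E j`, where in
`0`-based indexing `x i : E (i+1) →ₗ E i` plays the role of `x_{i+1} : E_{i+1} → E_i`. -/
def compChain {E : ℕ → Type*} [∀ i, AddCommGroup (E i)] [∀ i, Module ℂ (E i)]
    (x : ∀ i : ℕ, E (i + 1) →ₗ[ℂ] E i) : (d : ℕ) → (j : ℕ) → (E (j + d) →ₗ[ℂ] E j)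
  | 0, _ => LinearMap.id
  | d + 1, j => compChain x d j ∘ₗ x (j + d)

open Module Submodule LinearMap

section Lattice

variable {α : Type*} [Lattice α]

theorem inf_sup_inf_eq_of_le {R C C' X : α} (hCC' : C ≤ C') (hX : R ⊓ X ⊔ C ⊓ X = X) :
    R ⊓ X ⊔ C' ⊓ X = X :=
  le_antisymm (sup_le inf_le_right inf_le_right)
    (hX.symm.trans_le (sup_le_sup_left (inf_le_inf_right X hCC') _))

variable [BoundedOrder α] [IsModularLattice α] [ComplementedLattice α]

theorem exists_ge_disjoint_inf_sup_eq {R X Y C : α} (hXY : X ≤ Y) (hRC : Disjoint R C)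
    (hX : R ⊓ X ⊔ C = X) : ∃ C', C ≤ C' ∧ Disjoint R C' ∧ R ⊓ Y ⊔ C' = Y := by
  obtain ⟨D, hD, hDY⟩ := IsModularLattice.exists_disjoint_and_sup_eq
    (sup_le (inf_le_right : R ⊓ Y ≤ Y) hXY)
  have hCX : C ≤ X := hX ▸ le_sup_right
  have hCDY : C ⊔ D ≤ Y := sup_le (hCX.trans hXY) (hDY ▸ le_sup_right)
  refine ⟨C ⊔ D, le_sup_left, disjoint_iff_inf_le.2 ?_, le_antisymm (sup_le inf_le_right hCDY) ?_⟩
  · have hmod : (C ⊔ D) ⊓ (R ⊓ Y ⊔ X) = C := by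
      rw [sup_inf_assoc_of_le D (hCX.trans le_sup_right), inf_comm, hD.eq_bot, sup_bot_eq]
    calc R ⊓ (C ⊔ D) ≤ R ⊓ ((C ⊔ D) ⊓ (R ⊓ Y ⊔ X)) :=
          le_inf inf_le_left (le_inf inf_le_right
            (le_sup_of_le_left (le_inf inf_le_left (inf_le_right.trans hCDY))))
      _ = R ⊓ C := by rw [hmod]
      _ ≤ ⊥ := hRC.le_bot
  · calc Y = R ⊓ Y ⊔ X ⊔ D := hDY.symm
      _ ≤ R ⊓ Y ⊔ (C ⊔ D) := by
        rw [← sup_assoc]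
        refine sup_le_sup_right (sup_le le_sup_left ?_) D
        calc X = R ⊓ X ⊔ C := hX.symm
          _ ≤ R ⊓ Y ⊔ C := sup_le_sup_right (inf_le_inf_left R hXY) C

theorem exists_isCompl_inf_sup_inf_eq (F : ℕ → α) (hF : Monotone F) (R : α) (N : ℕ) :
    ∃ C, IsCompl R C ∧ ∀ d ≤ N, R ⊓ F d ⊔ C ⊓ F d = F d := by
  have hstep : ∀ {C X}, C ≤ X → R ⊓ X ⊔ C = X → R ⊓ X ⊔ C ⊓ X = X := fun hCX h => by
    rwa [inf_eq_left.2 hCX]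
  obtain ⟨C, hRC, hCN, hC⟩ : ∃ C, Disjoint R C ∧ R ⊓ F N ⊔ C = F N ∧
      ∀ d ≤ N, R ⊓ F d ⊔ C ⊓ F d = F d := by
    induction N with
    | zero =>
      obtain ⟨C, -, hRC, hC⟩ := exists_ge_disjoint_inf_sup_eq (bot_le : ⊥ ≤ F 0)
        disjoint_bot_right (by simp)
      refine ⟨C, hRC, hC, fun d hd => ?_⟩
      obtain rfl := Nat.le_zero.1 hd
      exact hstep (hC ▸ le_sup_right) hC
    | succ N ih =>
      obtain ⟨C, hRC, hCN, hC⟩ := ih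
      obtain ⟨C', hCC', hRC', hC'⟩ := exists_ge_disjoint_inf_sup_eq (hF N.le_succ) hRC hCN
      refine ⟨C', hRC', hC', fun d hd => ?_⟩
      rcases Nat.of_le_succ hd with hd | rfl
      · exact inf_sup_inf_eq_of_le hCC' (hC d hd)
      · exact hstep (hC' ▸ le_sup_right) hC'
  obtain ⟨C', hCC', hRC', hC'⟩ := exists_ge_disjoint_inf_sup_eq le_top hRC hCN
  exact ⟨C', ⟨hRC', codisjoint_iff.2 (by simpa using hC')⟩,
    fun d hd => inf_sup_inf_eq_of_le hCC' (hC d hd)⟩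

end Lattice

section LinearAlgebra

variable {K V V' W : Type*} [Field K] [AddCommGroup V] [Module K V] [AddCommGroup V'] [Module K V']
  [AddCommGroup W] [Module K W]

noncomputable def equivOfIsCompl {p q : Submodule K V} {p' q' : Submodule K V'} (h : IsCompl p q)
    (h' : IsCompl p' q') (e : p ≃ₗ[K] p') (f : q ≃ₗ[K] q') : V ≃ₗ[K] V' :=
  (prodEquivOfIsCompl p q h).symm ≪≫ₗ e.prodCongr f ≪≫ₗ prodEquivOfIsCompl p' q' h'

section equivOfIsCompl

variable {p q : Submodule K V} {p' q' : Submodule K V'} (h : IsCompl p q) (h' : IsCompl p' q')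
  (e : p ≃ₗ[K] p') (f : q ≃ₗ[K] q')

theorem equivOfIsCompl_comp_subtype_left :
    (equivOfIsCompl h h' e f : V →ₗ[K] V') ∘ₗ p.subtype = p'.subtype ∘ₗ e := by
  ext v
  simp [equivOfIsCompl]

theorem equivOfIsCompl_comp_subtype_right :
    (equivOfIsCompl h h' e f : V →ₗ[K] V') ∘ₗ q.subtype = q'.subtype ∘ₗ f := by
  ext v
  simp [equivOfIsCompl]

end equivOfIsCompl

theorem IsCompl.linearMap_ext {p q : Submodule K V} (h : IsCompl p q) {φ ψ : V →ₗ[K] W}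
    (hp : φ ∘ₗ p.subtype = ψ ∘ₗ p.subtype) (hq : φ ∘ₗ q.subtype = ψ ∘ₗ q.subtype) : φ = ψ := by
  rw [← ofIsCompl_eq' h (φ := φ ∘ₗ p.subtype) (ψ := φ ∘ₗ q.subtype) rfl rfl, hp, hq,
    ofIsCompl_eq' h rfl rfl]

theorem map_inf_eq_of_comp_subtype {p : Submodule K V} {p' : Submodule K V'} {e : V ≃ₗ[K] V'}
    {e₀ : p ≃ₗ[K] p'} (he : (e : V →ₗ[K] V') ∘ₗ p.subtype = p'.subtype ∘ₗ e₀)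
    {X : Submodule K V} {X' : Submodule K V'}
    (hX : (X.comap p.subtype).map (e₀ : p →ₗ[K] p') = X'.comap p'.subtype) :
    (p ⊓ X).map (e : V →ₗ[K] V') = p' ⊓ X' := by
  rw [← map_comap_subtype, ← map_comap_subtype, ← map_comp, he, map_comp, hX]

theorem finrank_comap_subtype (p q : Submodule K V) :
    finrank K (q.comap p.subtype) = finrank K ↥(p ⊓ q) := by
  rw [← finrank_map_subtype_eq, map_comap_subtype]

theorem finrank_comap_eq_finrank_ker_add [FiniteDimensional K V] (f : V →ₗ[K] W)
    (X : Submodule K W) :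
    finrank K (X.comap f) = finrank K (ker f) + finrank K ↥(range f ⊓ X) := by
  have hker : ker f ≤ X.comap f := comap_mono bot_le
  rw [← (f.domRestrict (X.comap f)).finrank_range_add_finrank_ker, range_domRestrict,
    map_comap_eq, ker_domRestrict, finrank_comap_subtype, inf_eq_right.2 hker, add_comm]

theorem finrank_inf_add_finrank_inf [FiniteDimensional K V] {p q X : Submodule K V}
    (h : IsCompl p q) (hX : p ⊓ X ⊔ q ⊓ X = X) :
    finrank K ↥(p ⊓ X) + finrank K ↥(q ⊓ X) = finrank K X := by
  have := finrank_sup_add_finrank_inf_eq (p ⊓ X) (q ⊓ X)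
  rwa [hX, (h.disjoint.mono inf_le_left inf_le_left).eq_bot, finrank_bot, add_zero, eq_comm] at this

theorem exists_linearEquiv_comp_subtype_eq [FiniteDimensional K V] [FiniteDimensional K V']
    (p : Submodule K V) (p' : Submodule K V') (hV : finrank K V = finrank K V')
    (e₀ : p ≃ₗ[K] p') : ∃ e : V ≃ₗ[K] V', (e : V →ₗ[K] V') ∘ₗ p.subtype = p'.subtype ∘ₗ e₀ := by
  obtain ⟨q, hq⟩ := p.exists_isCompl
  obtain ⟨q', hq'⟩ := p'.exists_isCompl
  have hqq' : finrank K q = finrank K q' := by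
    have := finrank_add_eq_of_isCompl hq
    have := finrank_add_eq_of_isCompl hq'
    have := e₀.finrank_eq
    omega
  exact ⟨equivOfIsCompl hq hq' e₀ (.ofFinrankEq q q' hqq'),
    equivOfIsCompl_comp_subtype_left hq hq' _ _⟩

theorem exists_linearEquiv_map_eq [FiniteDimensional K V] [FiniteDimensional K V'] (N : ℕ)
    (G : ℕ → Submodule K V) (G' : ℕ → Submodule K V') (hG : Monotone G) (hG' : Monotone G')
    (hV : finrank K V = finrank K V') (hGG' : ∀ d < N, finrank K (G d) = finrank K (G' d)) :
    ∃ e : V ≃ₗ[K] V', ∀ d < N, (G d).map (e : V →ₗ[K] V') = G' d := by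
  induction N generalizing V V' with
  | zero => exact ⟨.ofFinrankEq V V' hV, by simp⟩
  | succ N ih =>
    obtain ⟨e₀, he₀⟩ := ih (fun d => (G d).comap (G N).subtype)
      (fun d => (G' d).comap (G' N).subtype) (fun _ _ h => comap_mono (hG h))
      (fun _ _ h => comap_mono (hG' h)) (hGG' N N.lt_succ_self) fun d hd => by
        rw [finrank_comap_subtype, finrank_comap_subtype, inf_eq_right.2 (hG hd.le),
          inf_eq_right.2 (hG' hd.le)]
        exact hGG' d (by omega)
    obtain ⟨e, he⟩ := exists_linearEquiv_comp_subtype_eq (G N) (G' N) hV e₀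
    refine ⟨e, fun d hd => ?_⟩
    have hGd : G d ≤ G N := hG (Nat.le_of_lt_succ hd)
    have hG'd : G' d ≤ G' N := hG' (Nat.le_of_lt_succ hd)
    rw [← inf_eq_right.2 hGd, ← inf_eq_right.2 hG'd]
    refine map_inf_eq_of_comp_subtype he ?_
    rcases Nat.lt_succ_iff_lt_or_eq.1 hd with hd | rfl
    · exact he₀ d hd
    · rw [comap_subtype_self, comap_subtype_self, Submodule.map_top, LinearEquiv.range]

theorem exists_linearEquiv_map_eq_of_finrank_inf_eq [FiniteDimensional K V] (F : ℕ → Submodule K V)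
    (hF : Monotone F) (N : ℕ) {P Q : Submodule K V} (hPQ : finrank K P = finrank K Q)
    (hPQF : ∀ d ≤ N, finrank K ↥(P ⊓ F d) = finrank K ↥(Q ⊓ F d)) :
    ∃ a : V ≃ₗ[K] V, P.map (a : V →ₗ[K] V) = Q ∧ ∀ d ≤ N, (F d).map (a : V →ₗ[K] V) = F d := by
  obtain ⟨C, hPC, hPCF⟩ := exists_isCompl_inf_sup_inf_eq F hF P N
  obtain ⟨D, hQD, hQDF⟩ := exists_isCompl_inf_sup_inf_eq F hF Q N
  have hCD : finrank K C = finrank K D := by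
    have := finrank_add_eq_of_isCompl hPC
    have := finrank_add_eq_of_isCompl hQD
    omega
  obtain ⟨α, hα⟩ := exists_linearEquiv_map_eq (N + 1) (fun d => (F d).comap P.subtype)
    (fun d => (F d).comap Q.subtype) (fun _ _ h => comap_mono (hF h))
    (fun _ _ h => comap_mono (hF h)) hPQ fun d hd => by
      rw [finrank_comap_subtype, finrank_comap_subtype]
      exact hPQF d (by omega)
  obtain ⟨β, hβ⟩ := exists_linearEquiv_map_eq (N + 1) (fun d => (F d).comap C.subtype)
    (fun d => (F d).comap D.subtype) (fun _ _ h => comap_mono (hF h))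
    (fun _ _ h => comap_mono (hF h)) hCD fun d hd => by
      have := finrank_inf_add_finrank_inf hPC (hPCF d (by omega))
      have := finrank_inf_add_finrank_inf hQD (hQDF d (by omega))
      have := hPQF d (by omega)
      rw [finrank_comap_subtype, finrank_comap_subtype]
      omega
  have hαP := equivOfIsCompl_comp_subtype_left hPC hQD α β
  have hβC := equivOfIsCompl_comp_subtype_right hPC hQD α β
  refine ⟨equivOfIsCompl hPC hQD α β, ?_, fun d hd => ?_⟩
  · simpa using map_inf_eq_of_comp_subtype (X := ⊤) (X' := ⊤) hαP
      (by rw [comap_top, comap_top, Submodule.map_top, LinearEquiv.range])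
  · conv_lhs => rw [← hPCF d hd]
    rw [Submodule.map_sup, map_inf_eq_of_comp_subtype hαP (hα d (by omega)),
      map_inf_eq_of_comp_subtype hβC (hβ d (by omega)), hQDF d hd]

theorem exists_linearEquiv_comp_rangeRestrict (f : V →ₗ[K] W) (a : V ≃ₗ[K] V)
    (ha : (ker f).map (a : V →ₗ[K] V) = ker f) :
    ∃ ρ : range f ≃ₗ[K] range f,
      (ρ : range f →ₗ[K] range f) ∘ₗ f.rangeRestrict = f.rangeRestrict ∘ₗ a :=
  ⟨f.quotKerEquivRange.symm ≪≫ₗ Quotient.equiv _ _ a ha ≪≫ₗ f.quotKerEquivRange, by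
    ext v
    simp [show f.quotKerEquivRange.symm (f.rangeRestrict v) = Submodule.Quotient.mk v from
      (LinearEquiv.symm_apply_eq _).2 rfl]⟩

theorem exists_linearEquiv_comp_eq_of_range_eq [FiniteDimensional K W] {f g : W →ₗ[K] V}
    (hfg : range f = range g) : ∃ b : W ≃ₗ[K] W, f = g ∘ₗ b := by
  obtain ⟨C, hC⟩ := (ker f).exists_isCompl
  obtain ⟨D, hD⟩ := (ker g).exists_isCompl
  have hker : finrank K (ker f) = finrank K (ker g) := by
    have := f.finrank_range_add_finrank_ker
    have := g.finrank_range_add_finrank_ker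
    rw [hfg] at *
    omega
  let eC : C ≃ₗ[K] D := (quotientEquivOfIsCompl _ C hC).symm ≪≫ₗ f.quotKerEquivRange ≪≫ₗ
    .ofEq _ _ hfg ≪≫ₗ g.quotKerEquivRange.symm ≪≫ₗ quotientEquivOfIsCompl _ D hD
  refine ⟨equivOfIsCompl hC hD (.ofFinrankEq _ _ hker) eC, hC.linearMap_ext ?_ ?_⟩
  · rw [comp_assoc, equivOfIsCompl_comp_subtype_left, ← comp_assoc]
    ext v
    simp
  · rw [comp_assoc, equivOfIsCompl_comp_subtype_right, ← comp_assoc]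
    have hgD : ∀ q, g (quotientEquivOfIsCompl _ D hD q) = g.quotKerEquivRange q := fun q => by
      rw [← quotKerEquivRange_apply_mk, mk_quotientEquivOfIsCompl_apply]
    ext v
    simp [eC, hgD]

theorem exists_linearEquiv_comp_eq_comp_of_map_comap_eq (f : V →ₗ[K] W)
    (a : V ≃ₗ[K] V) (hker : (ker f).map (a : V →ₗ[K] V) = ker f) (F : ℕ → Submodule K W)
    (hF : Monotone F) (N : ℕ) (ha : ∀ d ≤ N, ((F d).comap f).map (a : V →ₗ[K] V) = (F d).comap f) :
    ∃ b : W ≃ₗ[K] W, (b : W →ₗ[K] W) ∘ₗ f = f ∘ₗ a ∧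
      ∀ d ≤ N, (F d).map (b : W →ₗ[K] W) = F d := by
  obtain ⟨ρ, hρ⟩ := exists_linearEquiv_comp_rangeRestrict f a hker
  obtain ⟨C, hRC, hRCF⟩ := exists_isCompl_inf_sup_inf_eq F hF (range f) N
  set b := equivOfIsCompl hRC hRC ρ (LinearEquiv.refl K C)
  have hbf : (b : W →ₗ[K] W) ∘ₗ f = f ∘ₗ a := by
    have hf : f = (range f).subtype ∘ₗ f.rangeRestrict := rfl
    rw [hf, ← comp_assoc, equivOfIsCompl_comp_subtype_left, comp_assoc, hρ, comp_assoc]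
  refine ⟨b, hbf, fun d hd => ?_⟩
  have hR : (range f ⊓ F d).map (b : W →ₗ[K] W) = range f ⊓ F d := by
    rw [← map_comap_eq, ← map_comp, hbf, map_comp, ha d hd]
  have hC : (C ⊓ F d).map (b : W →ₗ[K] W) = C ⊓ F d :=
    map_inf_eq_of_comp_subtype (equivOfIsCompl_comp_subtype_right hRC hRC ρ _)
      (by rw [LinearEquiv.refl_toLinearMap, Submodule.map_id])
  conv_lhs => rw [← hRCF d hd]
  rw [Submodule.map_sup, hR, hC, hRCF d hd]

section Chain

variable {E : ℕ → Type*} [∀ i, AddCommGroup (E i)] [∀ i, Module K (E i)]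

/-- For `d ≤ m`, `chainKer x m d` is the kernel of the composite `E m → E (m - d)` of `d`
consecutive maps; it is defined through preimages so that no casts between the `E i` arise. -/
def chainKer (x : ∀ i, E (i + 1) →ₗ[K] E i) : (m d : ℕ) → Submodule K (E m)
  | 0, _ => ⊥
  | _ + 1, 0 => ⊥
  | m + 1, d + 1 => (chainKer x m d).comap (x m)

variable (x y : ∀ i, E (i + 1) →ₗ[K] E i)

theorem chainKer_zero_right (m : ℕ) : chainKer x m 0 = ⊥ := by
  cases m <;> rfl

theorem chainKer_succ_succ (m d : ℕ) :
    chainKer x (m + 1) (d + 1) = (chainKer x m d).comap (x m) := rfl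

theorem chainKer_succ_one (m : ℕ) : chainKer x (m + 1) 1 = ker (x m) := by
  rw [chainKer_succ_succ, chainKer_zero_right, comap_bot]

theorem monotone_chainKer (m : ℕ) : Monotone (chainKer x m) := by
  induction m with
  | zero => exact fun _ _ _ => le_rfl
  | succ m ih =>
    refine monotone_nat_of_le_succ fun d => ?_
    cases d with
    | zero => exact (chainKer_zero_right x _).trans_le bot_le
    | succ d => exact comap_mono (ih d.le_succ)

def IsChainIso (k : ℕ) (h : ∀ i, E i ≃ₗ[K] E i) : Prop :=
  ∀ i < k, (h i : E i →ₗ[K] E i) ∘ₗ x i = y i ∘ₗ (h (i + 1) : E (i + 1) →ₗ[K] E (i + 1))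

variable {x y}

theorem isChainIso_iff {k : ℕ} {h : ∀ i, E i ≃ₗ[K] E i} :
    IsChainIso x y k h ↔ ∀ i < k,
      y i = (h i : E i →ₗ[K] E i) ∘ₗ x i ∘ₗ ((h (i + 1)).symm : E (i + 1) →ₗ[K] E (i + 1)) := by
  refine forall₂_congr fun i _ => ?_
  rw [← comp_assoc, LinearEquiv.eq_comp_toLinearMap_symm, eq_comm]

theorem IsChainIso.trans {z : ∀ i, E (i + 1) →ₗ[K] E i} {k : ℕ} {h g : ∀ i, E i ≃ₗ[K] E i}
    (hh : IsChainIso x y k h) (hg : IsChainIso y z k g) :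
    IsChainIso x z k fun i => (h i).trans (g i) := fun i hi => by
  simp only [LinearEquiv.coe_trans, comp_assoc, hh i hi]
  rw [← comp_assoc, hg i hi, comp_assoc]

theorem IsChainIso.update {n : ℕ} {h : ∀ i, E i ≃ₗ[K] E i} (hh : IsChainIso x y n h)
    {c : E (n + 1) ≃ₗ[K] E (n + 1)} (hc : (h n : E n →ₗ[K] E n) ∘ₗ x n = y n ∘ₗ c) :
    IsChainIso x y (n + 1) (Function.update h (n + 1) c) := fun i hi => by
  rcases Nat.lt_succ_iff_lt_or_eq.1 hi with hi | rfl
  · rw [Function.update_of_ne (by omega), Function.update_of_ne (by omega)]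
    exact hh i hi
  · rw [Function.update_of_ne (by omega), Function.update_self]
    exact hc

theorem IsChainIso.comap_chainKer {k : ℕ} {h : ∀ i, E i ≃ₗ[K] E i} (hh : IsChainIso x y k h)
    {m : ℕ} (hm : m ≤ k) (d : ℕ) :
    (chainKer y m d).comap (h m : E m →ₗ[K] E m) = chainKer x m d := by
  induction m generalizing d with
  | zero => simp [chainKer]
  | succ m ih =>
    cases d with
    | zero => simp [chainKer]
    | succ d =>
      rw [chainKer_succ_succ, chainKer_succ_succ, ← comap_comp, ← hh m hm, comap_comp,
        ih (by omega)]

theorem IsChainIso.finrank_chainKer_eq {k : ℕ} {h : ∀ i, E i ≃ₗ[K] E i} (hh : IsChainIso x y k h)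
    {m : ℕ} (hm : m ≤ k) (d : ℕ) :
    finrank K (chainKer x m d) = finrank K (chainKer y m d) := by
  rw [← hh.comap_chainKer hm, comap_equiv_eq_map_symm, LinearEquiv.finrank_map_eq]

theorem exists_isChainIso_self_of_map_chainKer_eq (n : ℕ) (a : E n ≃ₗ[K] E n)
    (ha : ∀ d ≤ n, (chainKer y n d).map (a : E n →ₗ[K] E n) = chainKer y n d) :
    ∃ A, IsChainIso y y n A ∧ A n = a := by
  induction n with
  | zero =>
    exact ⟨Function.update (fun i => LinearEquiv.refl K (E i)) 0 a,
      fun i hi => absurd hi i.not_lt_zero, Function.update_self ..⟩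
  | succ n ih =>
    obtain ⟨b, hb, hbF⟩ := exists_linearEquiv_comp_eq_comp_of_map_comap_eq (y n) a
      (by rw [← chainKer_succ_one]; exact ha 1 (by omega)) (chainKer y n) (monotone_chainKer y n) n
      fun d hd => ha (d + 1) (by omega)
    obtain ⟨A, hA, rfl⟩ := ih b hbF
    exact ⟨_, hA.update hb, Function.update_self ..⟩

variable [∀ i, FiniteDimensional K (E i)]

theorem exists_isChainIso_self_comp_eq {n : ℕ} [FiniteDimensional K W] (f g : W →ₗ[K] E n)
    (hfg : ∀ d ≤ n, finrank K ((chainKer y n d).comap f) = finrank K ((chainKer y n d).comap g)) :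
    ∃ (A : ∀ i, E i ≃ₗ[K] E i) (b : W ≃ₗ[K] W),
      IsChainIso y y n A ∧ (A n : E n →ₗ[K] E n) ∘ₗ f = g ∘ₗ (b : W →ₗ[K] W) := by
  have hker : finrank K (ker f) = finrank K (ker g) := by
    have := hfg 0 n.zero_le
    rwa [chainKer_zero_right, comap_bot, comap_bot] at this
  have hrange : finrank K (range f) = finrank K (range g) := by
    have := f.finrank_range_add_finrank_ker
    have := g.finrank_range_add_finrank_ker
    omega
  obtain ⟨a, haP, haF⟩ := exists_linearEquiv_map_eq_of_finrank_inf_eq (chainKer y n)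
    (monotone_chainKer y n) n hrange fun d hd => by
      have := hfg d hd
      rw [finrank_comap_eq_finrank_ker_add, finrank_comap_eq_finrank_ker_add] at this
      omega
  obtain ⟨A, hA, rfl⟩ := exists_isChainIso_self_of_map_chainKer_eq n a haF
  obtain ⟨b, hb⟩ := exists_linearEquiv_comp_eq_of_range_eq (f := (A n : E n →ₗ[K] E n) ∘ₗ f)
    (g := g) (by rw [range_comp, haP])
  exact ⟨A, b, hA, hb⟩

theorem exists_isChainIso_iff (k : ℕ) :
    (∃ h, IsChainIso x y k h) ↔
      ∀ m ≤ k, ∀ d ≤ m, finrank K (chainKer x m d) = finrank K (chainKer y m d) := by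
  refine ⟨fun ⟨h, hh⟩ m hm d _ => hh.finrank_chainKer_eq hm d, fun hdim => ?_⟩
  induction k with
  | zero => exact ⟨fun i => LinearEquiv.refl K (E i), fun i hi => absurd hi i.not_lt_zero⟩
  | succ n ih =>
    obtain ⟨h, hh⟩ := ih fun m hm => hdim m (by omega)
    obtain ⟨A, b, hA, hAb⟩ := exists_isChainIso_self_comp_eq ((h n : E n →ₗ[K] E n) ∘ₗ x n) (y n)
      fun d hd => by
        rw [comap_comp, hh.comap_chainKer le_rfl]
        exact hdim (n + 1) le_rfl (d + 1) (by omega)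
    refine ⟨_, (hh.trans hA).update (c := b) ?_⟩
    rw [LinearEquiv.coe_trans, comp_assoc, hAb]

end Chain

end LinearAlgebra

section Complex

variable {E : ℕ → Type*} [∀ i, AddCommGroup (E i)] [∀ i, Module ℂ (E i)]
  (x y : ∀ i, E (i + 1) →ₗ[ℂ] E i)

theorem ker_compChain (d j : ℕ) : ker (compChain x d j) = chainKer x (j + d) d := by
  induction d with
  | zero => exact ker_id.trans (chainKer_zero_right x j).symm
  | succ d ih => rw [compChain, ker_comp, ih]; rfl

theorem forall_finrank_range_compChain_eq_iff [∀ i, FiniteDimensional ℂ (E i)] (k : ℕ) :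
    (∀ d j : ℕ, 0 < d → j + d ≤ k →
        finrank ℂ (range (compChain x d j)) = finrank ℂ (range (compChain y d j))) ↔
      ∀ m ≤ k, ∀ d ≤ m, finrank ℂ (chainKer x m d) = finrank ℂ (chainKer y m d) := by
  have hx (d j : ℕ) := ker_compChain x d j ▸ (compChain x d j).finrank_range_add_finrank_ker
  have hy (d j : ℕ) := ker_compChain y d j ▸ (compChain y d j).finrank_range_add_finrank_ker
  refine ⟨fun H m hm d hd => ?_, fun H d j _ hjd => ?_⟩
  · obtain ⟨j, rfl⟩ : ∃ j, m = j + d := ⟨m - d, by omega⟩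
    rcases d.eq_zero_or_pos with rfl | hd0
    · rw [chainKer_zero_right, chainKer_zero_right]
    · have := H d j hd0 hm
      have := hx d j
      have := hy d j
      omega
  · have := H (j + d) hjd d (by omega)
    have := hx d j
    have := hy d j
    omega

end Complex

/-- Two tuples `x, y` of linear maps `x_i : E_i → E_{i-1}` (`1 ≤ i ≤ k`) lie in the same
orbit of `H = GL(E_0) × ⋯ × GL(E_k)` acting by
`(h_0, …, h_k) · (x_1, …, x_k) = (h_0 x_1 h_1⁻¹, …, h_{k-1} x_k h_k⁻¹)` if and only if
all the composites `x_{i j} = x_{j+1} ∘ ⋯ ∘ x_i` and `y_{i j}` have equal ranks. -/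
theorem stmt15 (k : ℕ) (E : ℕ → Type*) [∀ i, AddCommGroup (E i)] [∀ i, Module ℂ (E i)]
    [∀ i, FiniteDimensional ℂ (E i)]
    (x y : ∀ i : ℕ, E (i + 1) →ₗ[ℂ] E i) :
    (∃ h : ∀ i : ℕ, E i ≃ₗ[ℂ] E i, ∀ i : ℕ, i < k →
        y i = (h i).toLinearMap ∘ₗ x i ∘ₗ (h (i + 1)).symm.toLinearMap) ↔
      ∀ d j : ℕ, 0 < d → j + d ≤ k →
        Module.finrank ℂ (LinearMap.range (compChain x d j)) =
          Module.finrank ℂ (LinearMap.range (compChain y d j)) := by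
  rw [forall_finrank_range_compChain_eq_iff, ← exists_isChainIso_iff]
  exact exists_congr fun h => isChainIso_iff.symm
end
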